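/- Let M : ℝ → ℝ be continuous and define the magnetic sesquilinear form a(u, v) = ∫_ℝ conj( i u′(x) + M(x) u(x) ) · ( i v′(x) + M(x) v(x) ) dx for compactly supported smooth u, v : ℝ → ℂ. Then for every smooth real-valued f : ℝ → ℝ with bounded derivative and all u, v ∈ C_c^∞(ℝ, ℂ), the IMS formula holds: a(fu, fv) = (1/2)·[ a(u, f² v) + a(f² u, v) ] + ∫_ℝ f′(x)² · conj(u(x)) · v(x) dx. -/

import Mathlib

open MeasureTheory

/-!
Write `D = i d/dx + M`. For real `f` the Leibniz rule gives `D(fu) = f Du + i f′ u` and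
`D(f²u) = f² Du + 2i f f′ u`, so the IMS formula already holds pointwise for the integrands,
without any integration by parts. All integrands are continuous and vanish off the support
of `v`, so the integral splits accordingly.
-/

/-- The magnetic sesquilinear form `a(u, v) = ∫ conj(iu′ + Mu)(iv′ + Mv) dx`
(conjugate-linear in the first argument). -/
noncomputable def magneticForm (M : ℝ → ℝ) (u v : ℝ → ℂ) : ℂ :=
  ∫ x : ℝ, (starRingEnd ℂ) (Complex.I * deriv u x + (M x : ℂ) * u x) *
    (Complex.I * deriv v x + (M x : ℂ) * v x)

open Complex ComplexConjugate

lemma deriv_ofReal_mul {f : ℝ → ℝ} {w : ℝ → ℂ} {x : ℝ} (hf : DifferentiableAt ℝ f x)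
    (hw : DifferentiableAt ℝ w x) :
    deriv (fun y => (f y : ℂ) * w y) x = deriv f x * w x + f x * deriv w x :=
  (hf.hasDerivAt.ofReal_comp.mul hw.hasDerivAt).deriv

lemma deriv_ofReal_sq_mul {f : ℝ → ℝ} {w : ℝ → ℂ} {x : ℝ} (hf : DifferentiableAt ℝ f x)
    (hw : DifferentiableAt ℝ w x) :
    deriv (fun y => (f y : ℂ) ^ 2 * w y) x =
      2 * f x * deriv f x * w x + (f x : ℂ) ^ 2 * deriv w x := by
  refine (((hf.hasDerivAt.ofReal_comp.pow 2).mul hw.hasDerivAt).deriv).trans ?_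
  simp only [Pi.pow_apply]
  ring

lemma magnetic_ims_pointwise (m F F' : ℝ) (u u' v v' : ℂ) :
    conj (I * (F' * u + F * u') + m * (F * u)) * (I * (F' * v + F * v') + m * (F * v)) =
      1 / 2 * (conj (I * u' + m * u) * (I * (2 * F * F' * v + F ^ 2 * v') + m * (F ^ 2 * v)) +
        conj (I * (2 * F * F' * u + F ^ 2 * u') + m * (F ^ 2 * u)) * (I * v' + m * v)) +
      (F' : ℂ) ^ 2 * conj u * v := by
  simp only [map_add, map_mul, map_pow, map_ofNat, conj_I, conj_ofReal]
  linear_combination -(F' : ℂ) ^ 2 * conj u * v * I_sq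

lemma integrable_magneticForm_integrand {M : ℝ → ℝ} (hM : Continuous M) {u v : ℝ → ℂ}
    (hu : ContDiff ℝ 1 u) (hv : ContDiff ℝ 1 v) (hvs : HasCompactSupport v) :
    Integrable fun x => conj (I * deriv u x + (M x : ℂ) * u x) *
      (I * deriv v x + (M x : ℂ) * v x) := by
  have hu' := hu.continuous_deriv le_rfl
  have hv' := hv.continuous_deriv le_rfl
  have hcu := hu.continuous
  have hcv := hv.continuous
  refine Continuous.integrable_of_hasCompactSupport (by fun_prop) ?_
  exact ((hvs.deriv.mul_left).add hvs.mul_left).mul_left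

theorem statement10 (M : ℝ → ℝ) (hM : Continuous M)
    (f : ℝ → ℝ) (hf : ContDiff ℝ (⊤ : ℕ∞) f)
    (u v : ℝ → ℂ) (hu : ContDiff ℝ (⊤ : ℕ∞) u)
    (hv : ContDiff ℝ (⊤ : ℕ∞) v) (hvsupp : HasCompactSupport v) :
    magneticForm M (fun y => (f y : ℂ) * u y) (fun y => (f y : ℂ) * v y) =
      (1 / 2) * (magneticForm M u (fun y => ((f y : ℂ)) ^ 2 * v y) +
        magneticForm M (fun y => ((f y : ℂ)) ^ 2 * u y) v) +
      ∫ x : ℝ, ((deriv f x : ℝ) : ℂ) ^ 2 * (starRingEnd ℂ) (u x) * v x := by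
  have hf1 : ContDiff ℝ 1 f := hf.of_le (by exact_mod_cast le_top)
  have hu1 : ContDiff ℝ 1 u := hu.of_le (by exact_mod_cast le_top)
  have hv1 : ContDiff ℝ 1 v := hv.of_le (by exact_mod_cast le_top)
  have hfd := hf1.differentiable one_ne_zero
  have hud := hu1.differentiable one_ne_zero
  have hvd := hv1.differentiable one_ne_zero
  have hF : ContDiff ℝ 1 fun y => (f y : ℂ) ^ 2 := (ofRealCLM.contDiff.comp hf1).pow 2
  have hA := integrable_magneticForm_integrand hM hu1 (hF.mul hv1) hvsupp.mul_left
  have hB := integrable_magneticForm_integrand hM (hF.mul hu1) hv1 hvsupp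
  have hC : Integrable fun x => ((deriv f x : ℝ) : ℂ) ^ 2 * conj (u x) * v x := by
    have := hf1.continuous_deriv le_rfl
    have := hu1.continuous
    exact Continuous.integrable_of_hasCompactSupport (by fun_prop) hvsupp.mul_left
  unfold magneticForm
  rw [integral_congr_ae (.of_forall fun x => ?pointwise), integral_add ?_ hC, integral_const_mul,
    integral_add hA hB]
  case pointwise =>
    rw [deriv_ofReal_mul (hfd x) (hud x), deriv_ofReal_mul (hfd x) (hvd x),
      deriv_ofReal_sq_mul (hfd x) (hud x), deriv_ofReal_sq_mul (hfd x) (hvd x)]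
    exact magnetic_ims_pointwise (M x) (f x) (deriv f x) (u x) (deriv u x) (v x) (deriv v x)
  exact (hA.add hB).const_mul _
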